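/- Prefix-doubling recurrence: comparing suffixes i and j by their length-2h prefixes is equivalent to comparing the pairs (rank_h[i], rank_h[i+h]) and (rank_h[j], rank_h[j+h]) lexicographically, where rank_h of an out-of-range position (≥ n) is defined as −1 (smaller than all ranks). -/

import Mathlib

/-!
Splitting at `h`, the length-`2h` prefix of suffix `i` is the length-`h` prefix of suffix `i`
followed by that of suffix `i + h`. Comparing such concatenations lexicographically is comparing
the pairs lexicographically: if the first halves differ only because one is a proper prefix of
the other, the shorter suffix has already ended, so its second half is empty. Counting strictly
smaller keys is an order embedding, so `rank_h` orders length-`h` prefixes exactly as `List.Lex`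
does, and an out-of-range position has the empty prefix, the least list, which the rank `-1`
encodes.
-/

/-- The `h`-rank of suffix `i`: the number of positions `j` whose length-`h`
prefix of suffix `j` is lexicographically smaller than that of suffix `i`
(equal prefixes get equal ranks). -/
def hRank {α : Type*} [LinearOrder α] (n h : ℕ) (T : Fin n → α) (i : Fin n) : ℕ :=
  (Finset.univ.filter (fun j : Fin n =>
    List.Lex (· < ·) (((List.ofFn T).drop j).take h) (((List.ofFn T).drop i).take h))).card

/-- `hRank` extended by `-1` for out-of-range positions. -/
def hRankInt {α : Type*} [LinearOrder α] (n h : ℕ) (T : Fin n → α) (i : ℕ) : ℤ :=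
  if hi : i < n then (hRank n h T ⟨i, hi⟩ : ℤ) else -1

open Finset

theorem List.take_add_lt_take_add_iff {α : Type*} [LinearOrder α] (u v : List α) (h m : ℕ) :
    u.take (h + m) < v.take (h + m) ↔
      u.take h < v.take h ∨ u.take h = v.take h ∧ (u.drop h).take m < (v.drop h).take m := by
  induction h generalizing u v with
  | zero => simp
  | succ h ih =>
    rw [Nat.add_right_comm]
    rcases u with _ | ⟨a, u⟩ <;> rcases v with _ | ⟨b, v⟩
    · simp
    · simp
    · simp
    · simp only [take_succ_cons, drop_succ_cons, cons_lt_cons_iff, cons.injEq, ih]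
      tauto

theorem List.nil_lt_iff_ne_nil {α : Type*} [LinearOrder α] {l : List α} :
    [] < l ↔ l ≠ [] := by
  cases l <;> simp

section RankInFintype

variable {ι β : Type*} [Fintype ι] [LinearOrder β] (f : ι → β) {i j : ι}

theorem card_filter_lt_lt_card_filter_lt_iff :
    #{k | f k < f i} < #{k | f k < f j} ↔ f i < f j := by
  constructor
  · intro hcard
    by_contra! hji
    refine hcard.not_ge (card_le_card fun k hk => ?_)
    simp only [mem_filter, mem_univ, true_and] at hk ⊢
    exact hk.trans_le hji
  · intro hij
    refine card_lt_card ⟨fun k hk => ?_, fun hsub => ?_⟩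
    · simp only [mem_filter, mem_univ, true_and] at hk ⊢
      exact hk.trans hij
    · simpa using hsub (by simpa using hij : i ∈ ({k | f k < f j} : Finset ι))

theorem card_filter_lt_eq_card_filter_lt_iff :
    #{k | f k < f i} = #{k | f k < f j} ↔ f i = f j := by
  simp only [le_antisymm_iff, ← not_lt, card_filter_lt_lt_card_filter_lt_iff]

end RankInFintype

theorem List.take_drop_ofFn_eq_nil_iff {α : Type*} {n h : ℕ} {T : Fin n → α} (hh : 0 < h)
    {k : ℕ} : ((List.ofFn T).drop k).take h = [] ↔ n ≤ k := by
  simp [hh.ne']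

section HRank

variable {α : Type*} [LinearOrder α] {n h : ℕ} {T : Fin n → α}

theorem hRank_lt_hRank_iff (i j : Fin n) :
    hRank n h T i < hRank n h T j ↔
      ((List.ofFn T).drop i).take h < ((List.ofFn T).drop j).take h := by
  simp only [hRank, List.lex_lt]
  -- `hRank` filters with core's `<` on lists and its decidability instance, the general lemma
  -- with those of Mathlib's linear order on `List α`; `convert` identifies them.
  convert card_filter_lt_lt_card_filter_lt_iff (i := i) (j := j)
    fun k : Fin n => ((List.ofFn T).drop k).take h

theorem hRank_eq_hRank_iff (i j : Fin n) :
    hRank n h T i = hRank n h T j ↔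
      ((List.ofFn T).drop i).take h = ((List.ofFn T).drop j).take h := by
  simp only [hRank, List.lex_lt]
  convert card_filter_lt_eq_card_filter_lt_iff (i := i) (j := j)
    fun k : Fin n => ((List.ofFn T).drop k).take h

theorem hRankInt_of_lt {k : ℕ} (hk : k < n) : hRankInt n h T k = hRank n h T ⟨k, hk⟩ :=
  dif_pos hk

theorem hRankInt_of_le {k : ℕ} (hk : n ≤ k) : hRankInt n h T k = -1 :=
  dif_neg hk.not_gt

theorem hRankInt_eq_hRankInt_iff (i j : Fin n) :
    hRankInt n h T i = hRankInt n h T j ↔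
      ((List.ofFn T).drop i).take h = ((List.ofFn T).drop j).take h := by
  rw [hRankInt_of_lt i.2, hRankInt_of_lt j.2, Nat.cast_inj]
  exact hRank_eq_hRank_iff _ _

theorem hRankInt_lt_hRankInt_iff (hh : 0 < h) (k l : ℕ) :
    hRankInt n h T k < hRankInt n h T l ↔
      ((List.ofFn T).drop k).take h < ((List.ofFn T).drop l).take h := by
  rcases lt_or_ge k n with hk | hk <;> rcases lt_or_ge l n with hl | hl
  · rw [hRankInt_of_lt hk, hRankInt_of_lt hl, Nat.cast_lt]
    exact hRank_lt_hRank_iff _ _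
  · rw [hRankInt_of_lt hk, hRankInt_of_le hl, (List.take_drop_ofFn_eq_nil_iff hh).2 hl]
    simp only [List.not_lt_nil, iff_false, not_lt]
    omega
  · rw [hRankInt_of_le hk, hRankInt_of_lt hl, (List.take_drop_ofFn_eq_nil_iff hh).2 hk,
      List.nil_lt_iff_ne_nil, Ne, List.take_drop_ofFn_eq_nil_iff hh]
    simp only [not_le, hl, iff_true]
    omega
  · rw [hRankInt_of_le hk, hRankInt_of_le hl, (List.take_drop_ofFn_eq_nil_iff hh).2 hk,
      (List.take_drop_ofFn_eq_nil_iff hh).2 hl]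
    simp

end HRank

/-- Prefix-doubling recurrence: comparing suffixes `i` and `j` by their
length-`2h` prefixes is equivalent to comparing the rank pairs
`(rank_h[i], rank_h[i+h])` and `(rank_h[j], rank_h[j+h])` lexicographically,
where out-of-range ranks are `-1`. -/
theorem prefix_doubling_recurrence {α : Type*} [LinearOrder α] (n h : ℕ)
    (hh : 1 ≤ h) (T : Fin n → α) :
    ∀ i j : Fin n,
      List.Lex (· < ·) (((List.ofFn T).drop i).take (2 * h))
          (((List.ofFn T).drop j).take (2 * h)) ↔
        (hRankInt n h T i < hRankInt n h T j ∨
          (hRankInt n h T i = hRankInt n h T j ∧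
            hRankInt n h T (i + h) < hRankInt n h T (j + h))) := by
  intro i j
  rw [List.lex_lt, two_mul, List.take_add_lt_take_add_iff, List.drop_drop, List.drop_drop,
    hRankInt_lt_hRankInt_iff hh, hRankInt_lt_hRankInt_iff hh, hRankInt_eq_hRankInt_iff]
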